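/- arXiv:math/0611523 — 6 statements merged into one kernel-verified Lean document; each statement's English description precedes it below -/
import Mathlib

section
/- Let Γ be a driftless subordinator, c > 0, t ≥ 0, and fix c' ∈ (0,c). Set f(y) = P(Γ_y ≤ c'y) and ε = (c-c')²/2. Then on the event {Γ_y ≤ c'y}, exp(-y(ct + c²/2)) · exp(-Γ_y²/(2y) + Γ_y(t+c)) ≤ exp(-εy); consequently q_y(-ty)/p_y(-ty) ≤ exp(-εy) f(y) + (1 - f(y)) exp(yt²/2). -/
open MeasureTheory Real

/-- The Gaussian density `p_s(u) = (2πs)^{-1/2} exp(-u²/(2s))`. -/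
noncomputable def gaussDensity (s u : ℝ) : ℝ :=
  (Real.sqrt (2 * Real.pi * s))⁻¹ * Real.exp (-u ^ 2 / (2 * s))

/-- Let `Γ` be a driftless subordinator, `c > 0`, `t ≥ 0`, `c' ∈ (0,c)`,
`f(y) = P(Γ_y ≤ c' y)` and `ε = (c - c')²/2`. Then on the event `{Γ_y ≤ c' y}` (i.e. for any
value `0 ≤ a ≤ c' y` of `Γ_y`),
`exp(-y(ct + c²/2)) exp(-a²/(2y) + a(t+c)) ≤ exp(-ε y)`, and consequently
`q_y(-ty)/p_y(-ty) ≤ exp(-εy) f(y) + (1 - f(y)) exp(y t²/2)`. -/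
theorem event_bound_and_ratio_bound
    {Ω : Type*} [MeasurableSpace Ω] (μ : Measure Ω) [IsProbabilityMeasure μ]
    (Γ : ℝ → Ω → ℝ) (c c' t : ℝ) (q : ℝ → ℝ → ℝ)
    (hc : 0 < c) (hc' : c' ∈ Set.Ioo 0 c) (ht : 0 ≤ t)
    (hmeas : ∀ s, Measurable (Γ s))
    (hnonneg : ∀ s ≥ (0 : ℝ), ∀ᵐ ω ∂μ, 0 ≤ Γ s ω)
    (hq : ∀ s > (0 : ℝ), ∀ u : ℝ,
      q s u / gaussDensity s u =
        Real.exp (c * u - c ^ 2 * s / 2) *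
          ∫ ω, Real.exp (-(Γ s ω) ^ 2 / (2 * s) - Γ s ω * (u / s - c)) ∂μ)
    (f : ℝ → ℝ) (hf : ∀ y, f y = (μ {ω | Γ y ω ≤ c' * y}).toReal)
    (ε : ℝ) (hε : ε = (c - c') ^ 2 / 2) :
    ∀ y > (0 : ℝ),
      (∀ a : ℝ, 0 ≤ a → a ≤ c' * y →
        Real.exp (-(y * (c * t + c ^ 2 / 2))) *
          Real.exp (-a ^ 2 / (2 * y) + a * (t + c)) ≤ Real.exp (-(ε * y))) ∧
      q y (-(t * y)) / gaussDensity y (-(t * y)) ≤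
        Real.exp (-(ε * y)) * f y + (1 - f y) * Real.exp (y * t ^ 2 / 2) := by
  intro y hy
  obtain ⟨hc'0, hc'c⟩ := hc'
  have hy' : y ≠ 0 := ne_of_gt hy
  have h2y : (0:ℝ) < 2 * y := by linarith
  -- Part 1
  have key1 : ∀ a : ℝ, 0 ≤ a → a ≤ c' * y →
      Real.exp (-(y * (c * t + c ^ 2 / 2))) *
        Real.exp (-a ^ 2 / (2 * y) + a * (t + c)) ≤ Real.exp (-(ε * y)) := by
    intro a ha hac
    rw [← Real.exp_add, Real.exp_le_exp]
    have hnum : -2*y^2*(c*t + c^2/2) - a^2 + 2*y*a*(t+c) + 2*(ε*y)*y ≤ 0 := by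
      subst hε
      nlinarith [mul_nonneg (sub_nonneg.2 hac) (by nlinarith : (0:ℝ) ≤ 2*y*(t+c) - c'*y - a),
        mul_nonneg (mul_nonneg ht (sub_pos.2 hc'c).le) (mul_pos hy hy).le]
    have heq : -(y * (c * t + c ^ 2 / 2)) + (-a ^ 2 / (2 * y) + a * (t + c)) + ε * y
        = (-2*y^2*(c*t + c^2/2) - a^2 + 2*y*a*(t+c) + 2*(ε*y)*y) / (2*y) := by
      field_simp
      ring
    have := div_nonpos_of_nonpos_of_nonneg hnum h2y.le
    linarith [heq ▸ this]
  refine ⟨key1, ?_⟩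
  -- Part 2
  set G : Ω → ℝ := fun ω => Real.exp (c * (-(t * y)) - c ^ 2 * y / 2) *
      Real.exp (-(Γ y ω) ^ 2 / (2 * y) - Γ y ω * ((-(t * y)) / y - c)) with hG
  have hGform : ∀ ω, G ω = Real.exp (-(y * (c * t + c ^ 2 / 2))) *
      Real.exp (-(Γ y ω) ^ 2 / (2 * y) + Γ y ω * (t + c)) := by
    intro ω
    have h1 : c * (-(t * y)) - c ^ 2 * y / 2 = -(y * (c * t + c ^ 2 / 2)) := by ring
    have h2 : -(Γ y ω) ^ 2 / (2 * y) - Γ y ω * ((-(t * y)) / y - c)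
        = -(Γ y ω) ^ 2 / (2 * y) + Γ y ω * (t + c) := by
      field_simp
      ring
    simp only [hG]
    rw [h1, h2]
  -- global bound
  have key2 : ∀ ω, 0 ≤ Γ y ω → G ω ≤ Real.exp (y * t ^ 2 / 2) := by
    intro ω ha
    rw [hGform ω, ← Real.exp_add, Real.exp_le_exp]
    set a := Γ y ω
    have hnum : -2*y^2*(c*t + c^2/2) - a^2 + 2*y*a*(t+c) - (y*t^2/2)*(2*y) ≤ 0 := by
      nlinarith [sq_nonneg (y*(t+c) - a)]
    have heq : -(y * (c * t + c ^ 2 / 2)) + (-a ^ 2 / (2 * y) + a * (t + c)) - y*t^2/2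
        = (-2*y^2*(c*t + c^2/2) - a^2 + 2*y*a*(t+c) - (y*t^2/2)*(2*y)) / (2*y) := by
      field_simp
      ring
    have := div_nonpos_of_nonpos_of_nonneg hnum h2y.le
    linarith [heq ▸ this]
  set A := {ω | Γ y ω ≤ c' * y} with hA
  have hAmeas : MeasurableSet A := measurableSet_le (hmeas y) measurable_const
  have hGmeas : Measurable G := by
    apply Measurable.const_mul
    apply Measurable.exp
    fun_prop
  have hGnonneg : ∀ ω, 0 ≤ G ω := fun ω => by positivity
  have hGint : Integrable G μ := by
    refine Integrable.mono' (integrable_const (Real.exp (y * t ^ 2 / 2)))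
      hGmeas.aestronglyMeasurable ?_
    filter_upwards [hnonneg y hy.le] with ω hω
    rw [Real.norm_eq_abs, abs_of_nonneg (hGnonneg ω)]
    exact key2 ω hω
  have hint : q y (-(t * y)) / gaussDensity y (-(t * y)) = ∫ ω, G ω ∂μ := by
    rw [hq y hy (-(t * y)), ← integral_const_mul]
  rw [hint]
  have hsplit : ∫ ω, G ω ∂μ = (∫ ω in A, G ω ∂μ) + ∫ ω in Aᶜ, G ω ∂μ :=
    (integral_add_compl hAmeas hGint).symm
  have h1 : ∫ ω in A, G ω ∂μ ≤ (μ A).toReal * Real.exp (-(ε * y)) := by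
    have : ∫ ω in A, G ω ∂μ ≤ ∫ _ω in A, Real.exp (-(ε * y)) ∂μ := by
      refine setIntegral_mono_on_ae hGint.integrableOn (integrableOn_const ?_)
        hAmeas ?_
      · exact (measure_lt_top μ A).ne
      · filter_upwards [hnonneg y hy.le] with ω hω hωA
        rw [hGform ω]
        exact key1 (Γ y ω) hω hωA
    rwa [setIntegral_const, smul_eq_mul] at this
  have h2 : ∫ ω in Aᶜ, G ω ∂μ ≤ (μ Aᶜ).toReal * Real.exp (y * t ^ 2 / 2) := by
    have : ∫ ω in Aᶜ, G ω ∂μ ≤ ∫ _ω in Aᶜ, Real.exp (y * t ^ 2 / 2) ∂μ := by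
      refine setIntegral_mono_on_ae hGint.integrableOn (integrableOn_const ?_)
        hAmeas.compl ?_
      · exact (measure_lt_top μ Aᶜ).ne
      · filter_upwards [hnonneg y hy.le] with ω hω _
        exact key2 ω hω
    rwa [setIntegral_const, smul_eq_mul] at this
  have hcompl : (μ Aᶜ).toReal = 1 - (μ A).toReal := by
    rw [measure_compl hAmeas (measure_ne_top μ A), measure_univ,
      ENNReal.toReal_sub_of_le prob_le_one ENNReal.one_ne_top, ENNReal.toReal_one]
  have hfy : f y = (μ A).toReal := hf y
  rw [hsplit, hfy]
  rw [hcompl] at h2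
  linarith
end

section
/- For a driftless subordinator Γ and c > 0, t ≥ 0, the ratio q_y(-ty)/p_y(-ty) is strictly less than 1 for all sufficiently small y > 0. -/
open MeasureTheory Real Filter

set_option maxHeartbeats 1000000

theorem arith_aux (a b y p : ℝ) (ha : 0 < a) (hb : 0 ≤ b) (hy : 0 < y)
    (hay : a * y ≤ 1) (hby : Real.exp (b * y) < 2)
    (hp0 : 0 ≤ p) (hp : p ≤ a / (4 * (a + b))) :
    (1 - p) * Real.exp (-(a * y)) + p * Real.exp (b * y) < 1 := by
  have hab : 0 < a + b := by linarith
  have e3 : 0 < Real.exp (b * y) := Real.exp_pos _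
  have h1 : Real.exp (b * y) - Real.exp (-(a * y)) ≤ (a * y + b * y) * Real.exp (b * y) := by
    have e1 : Real.exp (-(a * y)) = Real.exp (b * y) * Real.exp (-(a * y) - b * y) := by
      rw [← Real.exp_add]; ring_nf
    have e2 : (-(a * y) - b * y) + 1 ≤ Real.exp (-(a * y) - b * y) := Real.add_one_le_exp _
    nlinarith
  have h2 : a * y / 2 ≤ 1 - Real.exp (-(a * y)) := by
    have e2 : (a * y) + 1 ≤ Real.exp (a * y) := Real.add_one_le_exp _
    have e3 : Real.exp (-(a * y)) * Real.exp (a * y) = 1 := by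
      rw [← Real.exp_add]; simp
    have e5 : 0 < Real.exp (-(a * y)) := Real.exp_pos _
    nlinarith [mul_le_mul_of_nonneg_left e2 e5.le,
      mul_pos (mul_pos ha hy) e5]
  have h3 : p * (Real.exp (b * y) - Real.exp (-(a * y))) < a * y / 2 := by
    have k1 : p * (Real.exp (b * y) - Real.exp (-(a * y))) ≤ p * ((a * y + b * y) * Real.exp (b * y)) :=
      mul_le_mul_of_nonneg_left h1 hp0
    have k2 : p * ((a * y + b * y) * Real.exp (b * y)) ≤ (a / (4 * (a + b))) * ((a * y + b * y) * Real.exp (b * y)) := by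
      apply mul_le_mul_of_nonneg_right hp; positivity
    have k3 : (a / (4 * (a + b))) * ((a * y + b * y) * Real.exp (b * y)) = (a * y / 4) * Real.exp (b * y) := by
      field_simp
    have k4 : (a * y / 4) * Real.exp (b * y) < a * y / 2 := by
      have : (a * y / 4) * Real.exp (b * y) < (a * y / 4) * 2 :=
        mul_lt_mul_of_pos_left hby (by positivity)
      linarith
    linarith
  nlinarith

theorem bad_tendsto {Ω : Type*} [MeasurableSpace Ω] (μ : Measure Ω) [IsProbabilityMeasure μ]
    (Γ : ℝ → Ω → ℝ) (hmeas : ∀ s, Measurable (Γ s))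
    (hsmall : ∀ᵐ ω ∂μ,
      Tendsto (fun y => Γ y ω / y) (nhdsWithin 0 (Set.Ioi 0)) (nhds 0))
    (ε : ℝ) (hε : 0 < ε) :
    Tendsto (fun y => (μ {ω | ε < Γ y ω / y}).toReal)
      (nhdsWithin (0:ℝ) (Set.Ioi 0)) (nhds 0) := by
  rw [Filter.tendsto_iff_seq_tendsto]
  intro u hu
  have hAmeas : ∀ n, MeasurableSet {ω | ε < Γ (u n) ω / (u n)} := by
    intro n
    exact measurableSet_lt measurable_const ((hmeas (u n)).div_const _)
  have key := MeasureTheory.tendsto_integral_of_dominated_convergence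
    (F := fun n => Set.indicator {ω | ε < Γ (u n) ω / (u n)} (fun _ => (1:ℝ)))
    (f := fun _ => (0:ℝ)) (bound := fun _ => (1:ℝ)) (μ := μ)
    (fun n => ((measurable_const.indicator (hAmeas n)).aestronglyMeasurable))
    (integrable_const 1)
    (fun n => Filter.Eventually.of_forall (fun ω => by
      by_cases h : ω ∈ {ω | ε < Γ (u n) ω / (u n)} <;>
        simp [Set.indicator_of_mem, Set.indicator_of_notMem, h]))
    (by
      filter_upwards [hsmall] with ω hω
      have := (hω.comp hu).eventually_lt_const hε
      refine Tendsto.congr' ?_ tendsto_const_nhds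
      filter_upwards [this] with n hn
      have : ω ∉ {ω | ε < Γ (u n) ω / (u n)} := by simpa using lt_asymm hn
      simp [Set.indicator_of_notMem this])
  have : ∀ n, (∫ ω, Set.indicator {ω | ε < Γ (u n) ω / (u n)} (fun _ => (1:ℝ)) ω ∂μ)
      = (μ {ω | ε < Γ (u n) ω / (u n)}).toReal := fun n =>
    MeasureTheory.integral_indicator_one (hAmeas n)
  simpa [this, Function.comp_def] using key

/-- For a driftless subordinator `Γ` (so that `Γ_y = o(y)` a.s. as `y → 0⁺`)
and `c > 0`, `t ≥ 0`, the ratio `q_y(-ty)/p_y(-ty)` is strictly less than `1` for all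
sufficiently small `y > 0`. -/
theorem density_ratio_lt_one_near_zero
    {Ω : Type*} [MeasurableSpace Ω] (μ : Measure Ω) [IsProbabilityMeasure μ]
    (Γ : ℝ → Ω → ℝ) (c t : ℝ) (q : ℝ → ℝ → ℝ)
    (hc : 0 < c) (ht : 0 ≤ t)
    (hmeas : ∀ s, Measurable (Γ s))
    (hnonneg : ∀ s ≥ (0 : ℝ), ∀ᵐ ω ∂μ, 0 ≤ Γ s ω)
    (hsmall : ∀ᵐ ω ∂μ,
      Tendsto (fun y => Γ y ω / y) (nhdsWithin 0 (Set.Ioi 0)) (nhds 0))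
    (hq : ∀ s > (0 : ℝ), ∀ u : ℝ,
      q s u / gaussDensity s u =
        Real.exp (c * u - c ^ 2 * s / 2) *
          ∫ ω, Real.exp (-(Γ s ω) ^ 2 / (2 * s) - Γ s ω * (u / s - c)) ∂μ) :
    ∀ᶠ y in nhdsWithin (0 : ℝ) (Set.Ioi 0),
      q y (-(t * y)) / gaussDensity y (-(t * y)) < 1 := by
  set a : ℝ := c ^ 2 / 4 with ha_def
  set b : ℝ := t ^ 2 / 2 with hb_def
  have ha : 0 < a := by positivity
  have hb : 0 ≤ b := by positivity
  have htc : 0 < t + c := by linarith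
  set ε : ℝ := c ^ 2 / (4 * (t + c)) with hε_def
  have hε : 0 < ε := by positivity
  have hL2 : 0 < Real.log 2 := Real.log_pos (by norm_num)
  set δ : ℝ := min (1 / a) (Real.log 2 / (b + 1)) with hδ_def
  have hδ : 0 < δ := lt_min (by positivity) (by positivity)
  have hsmalldel : ∀ᶠ y in nhdsWithin (0:ℝ) (Set.Ioi 0), y < δ :=
    Filter.Eventually.filter_mono nhdsWithin_le_nhds (eventually_lt_nhds hδ)
  have hbadlim := bad_tendsto μ Γ hmeas hsmall ε hε
  have hbadsmall : ∀ᶠ y in nhdsWithin (0:ℝ) (Set.Ioi 0),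
      (μ {ω | ε < Γ y ω / y}).toReal < a / (4 * (a + b)) :=
    hbadlim.eventually_lt_const (by positivity)
  filter_upwards [self_mem_nhdsWithin, hsmalldel, hbadsmall] with y hy hyδ hbady
  have hy : (0:ℝ) < y := hy
  -- conditions for arith_aux
  have hay : a * y ≤ 1 := by
    have : y ≤ 1 / a := le_of_lt (lt_of_lt_of_le hyδ (min_le_left _ _))
    calc a * y ≤ a * (1 / a) := mul_le_mul_of_nonneg_left this ha.le
      _ = 1 := by field_simp
  have hby : Real.exp (b * y) < 2 := by
    have h1 : y ≤ Real.log 2 / (b + 1) := le_of_lt (lt_of_lt_of_le hyδ (min_le_right _ _))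
    have h2 : b * y ≤ b * (Real.log 2 / (b + 1)) := mul_le_mul_of_nonneg_left h1 hb
    have h3 : b * (Real.log 2 / (b + 1)) < Real.log 2 := by
      rw [mul_div_assoc', div_lt_iff₀ (by linarith : (0:ℝ) < b + 1)]
      nlinarith
    calc Real.exp (b * y) < Real.exp (Real.log 2) := Real.exp_lt_exp.mpr (by linarith)
      _ = 2 := Real.exp_log (by norm_num)
  -- the integrand
  rw [hq y hy (-(t * y))]
  set f : Ω → ℝ := fun ω =>
    Real.exp (-(Γ y ω) ^ 2 / (2 * y) - Γ y ω * ((-(t * y)) / y - c)) with hf_def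
  have huy : (-(t * y)) / y = -t := by field_simp
  have hfm : Measurable f := by
    apply Measurable.exp
    exact ((((hmeas y).pow_const 2).neg).div_const (2 * y)).sub ((hmeas y).mul_const _)
  set C2 : ℝ := Real.exp ((t + c) ^ 2 * y / 2) with hC2_def
  have key2 : ∀ x : ℝ, Real.exp (-x ^ 2 / (2 * y) - x * ((-(t * y)) / y - c)) ≤ C2 := by
    intro x
    rw [hC2_def, Real.exp_le_exp, huy]
    have h2y : (0:ℝ) < 2 * y := by linarith
    have heq : -x ^ 2 / (2 * y) - x * (-t - c) = (-x ^ 2 + 2 * y * (x * (t + c))) / (2 * y) := by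
      field_simp; ring
    rw [heq, div_le_iff₀ h2y]
    nlinarith [sq_nonneg (x - (t + c) * y)]
  have hfint : Integrable f μ := by
    refine Integrable.mono' (integrable_const C2) hfm.aestronglyMeasurable
      (ae_of_all _ fun ω => ?_)
    rw [Real.norm_eq_abs, abs_of_pos (Real.exp_pos _)]
    exact key2 _
  set Bad : Set Ω := {ω | ε < Γ y ω / y} with hBad_def
  have hBm : MeasurableSet Bad := measurableSet_lt measurable_const ((hmeas y).div_const _)
  set mB : ℝ := (μ Bad).toReal with hmB_def
  set mG : ℝ := (μ Badᶜ).toReal with hmG_def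
  have hsum : mG + mB = 1 := by
    rw [hmG_def, hmB_def, ← ENNReal.toReal_add (measure_ne_top _ _) (measure_ne_top _ _),
      add_comm (μ Badᶜ), measure_add_measure_compl hBm, measure_univ, ENNReal.toReal_one]
  have hmB0 : 0 ≤ mB := ENNReal.toReal_nonneg
  have hmG0 : 0 ≤ mG := ENNReal.toReal_nonneg
  -- split the integral
  have hsplit : ∫ ω, f ω ∂μ = (∫ ω in Bad, f ω ∂μ) + ∫ ω in Badᶜ, f ω ∂μ :=
    (integral_add_compl hBm hfint).symm
  have hboundBad : ∫ ω in Bad, f ω ∂μ ≤ mB * C2 := by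
    calc ∫ ω in Bad, f ω ∂μ ≤ ∫ _ω in Bad, C2 ∂μ :=
          setIntegral_mono_ae_restrict hfint.integrableOn
            ((integrableOn_const_iff).mpr (Or.inr (measure_lt_top _ _)))
            (ae_of_all _ fun ω => key2 _)
      _ = mB * C2 := by rw [setIntegral_const, smul_eq_mul]; rfl
  have hboundGood : ∫ ω in Badᶜ, f ω ∂μ ≤ mG * Real.exp (a * y) := by
    calc ∫ ω in Badᶜ, f ω ∂μ ≤ ∫ _ω in Badᶜ, Real.exp (a * y) ∂μ := by
          refine setIntegral_mono_ae_restrict hfint.integrableOn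
            ((integrableOn_const_iff).mpr (Or.inr (measure_lt_top _ _))) ?_
          filter_upwards [ae_restrict_mem hBm.compl, ae_restrict_of_ae (hnonneg y hy.le)]
            with ω hω hω0
          have hωle : Γ y ω / y ≤ ε := by simpa [hBad_def] using hω
          have hx : Γ y ω ≤ ε * y := by
            rw [div_le_iff₀ hy] at hωle; linarith
          rw [hf_def, Real.exp_le_exp, huy]
          have h1 : -(Γ y ω) ^ 2 / (2 * y) ≤ 0 := by
            apply div_nonpos_of_nonpos_of_nonneg <;> nlinarith
          have h2 : -(Γ y ω) * (-t - c) = Γ y ω * (t + c) := by ring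
          have h3 : Γ y ω * (t + c) ≤ ε * y * (t + c) :=
            mul_le_mul_of_nonneg_right hx htc.le
          have h4 : ε * y * (t + c) = a * y := by
            rw [hε_def, ha_def]; field_simp
          nlinarith
      _ = mG * Real.exp (a * y) := by rw [setIntegral_const, smul_eq_mul]; rfl
  -- combine
  have hIle : ∫ ω, f ω ∂μ ≤ mG * Real.exp (a * y) + mB * C2 := by
    rw [hsplit]; linarith
  have hE : (0:ℝ) < Real.exp (c * (-(t * y)) - c ^ 2 * y / 2) := Real.exp_pos _
  have hfinal : Real.exp (c * (-(t * y)) - c ^ 2 * y / 2) * ∫ ω, f ω ∂μ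
      ≤ mG * Real.exp (-(a * y)) + mB * Real.exp (b * y) := by
    have step1 : Real.exp (c * (-(t * y)) - c ^ 2 * y / 2) * ∫ ω, f ω ∂μ
        ≤ Real.exp (c * (-(t * y)) - c ^ 2 * y / 2) * (mG * Real.exp (a * y) + mB * C2) :=
      mul_le_mul_of_nonneg_left hIle hE.le
    have e1 : Real.exp (c * (-(t * y)) - c ^ 2 * y / 2) * (mG * Real.exp (a * y))
        = mG * Real.exp (c * (-(t * y)) - c ^ 2 * y / 2 + a * y) := by
      rw [Real.exp_add]; ring
    have e2 : Real.exp (c * (-(t * y)) - c ^ 2 * y / 2 + a * y) ≤ Real.exp (-(a * y)) := by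
      rw [Real.exp_le_exp, ha_def]
      nlinarith [mul_nonneg (mul_nonneg hc.le ht) hy.le]
    have eadd : Real.exp (c * (-(t * y)) - c ^ 2 * y / 2) * Real.exp ((t + c) ^ 2 * y / 2)
        = Real.exp (b * y) := by
      rw [← Real.exp_add]; congr 1; rw [hb_def]; ring
    have e3 : Real.exp (c * (-(t * y)) - c ^ 2 * y / 2) * (mB * C2)
        = mB * Real.exp (b * y) := by
      calc Real.exp (c * (-(t * y)) - c ^ 2 * y / 2) * (mB * C2)
          = mB * (Real.exp (c * (-(t * y)) - c ^ 2 * y / 2) * Real.exp ((t + c) ^ 2 * y / 2)) := by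
            rw [hC2_def]; ring
        _ = mB * Real.exp (b * y) := by rw [eadd]
    calc Real.exp (c * (-(t * y)) - c ^ 2 * y / 2) * ∫ ω, f ω ∂μ
        ≤ Real.exp (c * (-(t * y)) - c ^ 2 * y / 2) * (mG * Real.exp (a * y) + mB * C2) := step1
      _ = mG * Real.exp (c * (-(t * y)) - c ^ 2 * y / 2 + a * y) + mB * Real.exp (b * y) := by
          rw [mul_add, e1, e3]
      _ ≤ mG * Real.exp (-(a * y)) + mB * Real.exp (b * y) := by
          have := mul_le_mul_of_nonneg_left e2 hmG0
          linarith
  have harith : mG * Real.exp (-(a * y)) + mB * Real.exp (b * y) < 1 := by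
    have h1mB : mG = 1 - mB := by linarith
    rw [h1mB]
    exact arith_aux a b y mB ha hb hy hay hby hmB0 (le_of_lt hbady)
  exact lt_of_le_of_lt hfinal harith
end

section
/- With X_t = B_t - Γ_t + ct (Γ a driftless subordinator independent of Brownian motion B, c ≥ 0, t ≥ 0 fixed), one has lim_{s → 1⁻} q_{1-s}(st)/p_{1-s}(st) = exp(tc). -/
open MeasureTheory Real Filter

/-- With `X_t = B_t - Γ_t + ct` (`Γ` a driftless subordinator independent of
the Brownian motion `B`, `c ≥ 0`, `t ≥ 0` fixed), one has
`lim_{s → 1⁻} q_{1-s}(st)/p_{1-s}(st) = exp (t c)`. -/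
theorem density_ratio_tendsto_exp
    {Ω : Type*} [MeasurableSpace Ω] (μ : Measure Ω) [IsProbabilityMeasure μ]
    (Γ : ℝ → Ω → ℝ) (c t : ℝ) (q : ℝ → ℝ → ℝ)
    (hc : 0 ≤ c) (ht : 0 ≤ t)
    (hmeas : ∀ s, Measurable (Γ s))
    (hnonneg : ∀ s ≥ (0 : ℝ), ∀ᵐ ω ∂μ, 0 ≤ Γ s ω)
    (hsmall : ∀ᵐ ω ∂μ,
      Tendsto (fun u => Γ u ω / u) (nhdsWithin 0 (Set.Ioi 0)) (nhds 0))
    (hq : ∀ u > (0 : ℝ), ∀ v : ℝ,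
      q u v / gaussDensity u v =
        Real.exp (c * v - c ^ 2 * u / 2) *
          ∫ ω, Real.exp (-(Γ u ω) ^ 2 / (2 * u) - Γ u ω * (v / u - c)) ∂μ) :
    Tendsto (fun s => q (1 - s) (s * t) / gaussDensity (1 - s) (s * t))
      (nhdsWithin 1 (Set.Iio 1)) (nhds (Real.exp (t * c))) := by
  set l := nhdsWithin (1 : ℝ) (Set.Iio 1) with hl
  set F : ℝ → Ω → ℝ := fun s ω =>
    Real.exp (-(Γ (1 - s) ω) ^ 2 / (2 * (1 - s)) - Γ (1 - s) ω * (s * t / (1 - s) - c)) with hF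
  have hlt1 : ∀ᶠ s in l, s < 1 := eventually_mem_nhdsWithin
  have hgt0 : ∀ᶠ s in l, (0 : ℝ) < s :=
    eventually_nhdsWithin_of_eventually_nhds (eventually_gt_nhds (by norm_num))
  -- the map s ↦ 1 - s tends to 0 within (0, ∞)
  have hu : Tendsto (fun s : ℝ => 1 - s) l (nhds 0) := by
    have h0 : Tendsto (fun s : ℝ => 1 - s) (nhds 1) (nhds 0) := by
      have hc : Continuous fun s : ℝ => 1 - s := by continuity
      simpa using hc.tendsto 1
    exact h0.mono_left nhdsWithin_le_nhds
  have h1s : Tendsto (fun s : ℝ => 1 - s) l (nhdsWithin 0 (Set.Ioi 0)) := by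
    refine tendsto_nhdsWithin_of_tendsto_nhds_of_eventually_within _ hu ?_
    filter_upwards [hlt1] with s hs
    exact Set.mem_Ioi.2 (by linarith)
  have hst : Tendsto (fun s : ℝ => s * t) l (nhds t) := by
    have : Tendsto (fun s : ℝ => s * t) (nhds 1) (nhds (1 * t)) :=
      (continuous_id.mul continuous_const).tendsto 1
    simpa using this.mono_left nhdsWithin_le_nhds
  -- integral tends to 1
  have hB : Tendsto (fun s => ∫ ω, F s ω ∂μ) l (nhds 1) := by
    have h1 : (1 : ℝ) = ∫ _ : Ω, (1 : ℝ) ∂μ := by simp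
    rw [h1]
    refine tendsto_integral_filter_of_dominated_convergence
      (fun _ => Real.exp (c ^ 2 / 2)) ?_ ?_ (integrable_const _) ?_
    · filter_upwards with s
      exact (Real.measurable_exp.comp
        (((((hmeas (1 - s)).pow_const 2).neg.div_const _).sub
          ((hmeas (1 - s)).mul_const _)))).aestronglyMeasurable
    · filter_upwards [hlt1, hgt0] with s hs1 hs0
      have hu0 : (0 : ℝ) < 1 - s := by linarith
      filter_upwards [hnonneg (1 - s) hu0.le] with ω hΓ
      set g := Γ (1 - s) ω
      have hv : 0 ≤ s * t := mul_nonneg hs0.le ht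
      have hu1 : 1 - s ≤ 1 := by linarith
      rw [Real.norm_eq_abs, Real.abs_exp, Real.exp_le_exp]
      have key : -g ^ 2 / (2 * (1 - s)) - g * (s * t / (1 - s) - c)
          = (-g ^ 2 - 2 * g * (s * t - c * (1 - s))) / (2 * (1 - s)) := by
        field_simp
      rw [key, div_le_iff₀ (by positivity)]
      nlinarith [sq_nonneg (g - c * (1 - s)), mul_nonneg hΓ hv,
        mul_nonneg (mul_nonneg (mul_self_nonneg c) hu0.le) (sub_nonneg.2 hu1)]
    · filter_upwards [hsmall] with ω hω
      have hG : Tendsto (fun s => Γ (1 - s) ω / (1 - s)) l (nhds 0) := hω.comp h1s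
      set G : ℝ → ℝ := fun s => Γ (1 - s) ω / (1 - s) with hGdef
      have he : Tendsto (fun s => -((1 - s) * (G s) ^ 2 / 2) - (s * t) * G s
          + c * ((1 - s) * G s)) l (nhds (-((0 : ℝ) * 0 ^ 2 / 2) - t * 0 + c * (0 * 0))) :=
        (((hu.mul (hG.pow 2)).div_const 2).neg.sub (hst.mul hG)).add ((hu.mul hG).const_mul c)
      have he0 : Tendsto (fun s => -((1 - s) * (G s) ^ 2 / 2) - (s * t) * G s
          + c * ((1 - s) * G s)) l (nhds 0) := by simpa using he
      have hexp : Tendsto (fun s => Real.exp (-((1 - s) * (G s) ^ 2 / 2) - (s * t) * G s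
          + c * ((1 - s) * G s))) l (nhds 1) := by
        simpa [Function.comp_def] using (Real.continuous_exp.tendsto 0).comp he0
      refine hexp.congr' ?_
      filter_upwards [hlt1] with s hs
      have hu0 : (1 : ℝ) - s ≠ 0 := by intro h; linarith [h]
      congr 1
      simp only [hGdef]
      field_simp
      ring
  -- prefactor tends to exp (t * c)
  have hA : Tendsto (fun s => Real.exp (c * (s * t) - c ^ 2 * (1 - s) / 2)) l
      (nhds (Real.exp (t * c))) := by
    have hcont : Continuous fun s : ℝ => Real.exp (c * (s * t) - c ^ 2 * (1 - s) / 2) := by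
      continuity
    have h2 : Tendsto (fun s => Real.exp (c * (s * t) - c ^ 2 * (1 - s) / 2)) l
        (nhds (Real.exp (c * (1 * t) - c ^ 2 * (1 - 1) / 2))) :=
      (hcont.tendsto 1).mono_left (nhdsWithin_le_nhds (s := Set.Iio 1))
    simpa [mul_comm] using h2
  have hAB := hA.mul hB
  rw [mul_one] at hAB
  refine hAB.congr' ?_
  filter_upwards [hlt1] with s hs
  exact (hq (1 - s) (by linarith) (s * t)).symm
end

section
/- With upper bound of the upper limit: limsup_{s→1⁻} q_{1-s}(st)/p_{1-s}(st) ≤ exp(tc), since for s close enough to 1 one has ts/(1-s) - c ≥ 0 and hence E[exp(-Γ_{1-s}²/(2(1-s)) - Γ_{1-s}(ts/(1-s) - c))] ≤ 1. -/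
open MeasureTheory Real Filter

/-- `limsup_{s→1⁻} q_{1-s}(st)/p_{1-s}(st) ≤ exp (t c)`, since for `s` close
enough to `1` one has `ts/(1-s) - c ≥ 0` and hence
`E[exp(-Γ_{1-s}²/(2(1-s)) - Γ_{1-s}(ts/(1-s) - c))] ≤ 1`. -/
theorem density_ratio_limsup_le
    {Ω : Type*} [MeasurableSpace Ω] (μ : Measure Ω) [IsProbabilityMeasure μ]
    (Γ : ℝ → Ω → ℝ) (c t : ℝ) (q : ℝ → ℝ → ℝ)
    (hc : 0 ≤ c) (ht : 0 < t)
    (hmeas : ∀ s, Measurable (Γ s))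
    (hnonneg : ∀ s ≥ (0 : ℝ), ∀ᵐ ω ∂μ, 0 ≤ Γ s ω)
    (hq : ∀ u > (0 : ℝ), ∀ v : ℝ,
      q u v / gaussDensity u v =
        Real.exp (c * v - c ^ 2 * u / 2) *
          ∫ ω, Real.exp (-(Γ u ω) ^ 2 / (2 * u) - Γ u ω * (v / u - c)) ∂μ) :
    (∀ᶠ s in nhdsWithin (1 : ℝ) (Set.Iio 1),
        0 ≤ t * s / (1 - s) - c ∧
        ∫ ω, Real.exp (-(Γ (1 - s) ω) ^ 2 / (2 * (1 - s)) -
            Γ (1 - s) ω * (t * s / (1 - s) - c)) ∂μ ≤ 1) ∧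
    Filter.limsup (fun s => q (1 - s) (s * t) / gaussDensity (1 - s) (s * t))
        (nhdsWithin (1 : ℝ) (Set.Iio 1)) ≤ Real.exp (t * c) := by
  set L := nhdsWithin (1 : ℝ) (Set.Iio 1) with hLdef
  have hL : L ≤ nhds 1 := nhdsWithin_le_nhds
  have htc : (0:ℝ) < t + c := by linarith
  have hfrac : c / (t + c) < 1 := by
    rw [div_lt_one htc]; linarith
  have hev : ∀ᶠ s in L, c / (t + c) < s ∧ s < 1 := by
    have h1 : ∀ᶠ s in L, s < 1 := eventually_mem_nhdsWithin.mono (fun x hx => hx)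
    have h2 : ∀ᶠ s in L, c / (t + c) < s := hL (eventually_gt_nhds hfrac)
    filter_upwards [h1, h2] with s hs1 hs2 using ⟨hs2, hs1⟩
  have key : ∀ᶠ s in L, 0 ≤ t * s / (1 - s) - c ∧
      ∫ ω, Real.exp (-(Γ (1 - s) ω) ^ 2 / (2 * (1 - s)) -
          Γ (1 - s) ω * (t * s / (1 - s) - c)) ∂μ ≤ 1 := by
    filter_upwards [hev] with s hs
    obtain ⟨h1, h2⟩ := hs
    have h1s : 0 < 1 - s := by linarith
    have hcs : c < s * (t + c) := (div_lt_iff₀ htc).mp h1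
    have hA : 0 ≤ t * s / (1 - s) - c := by
      rw [sub_nonneg, le_div_iff₀ h1s]; nlinarith
    refine ⟨hA, ?_⟩
    have hbd : ∀ᵐ ω ∂μ, ‖Real.exp (-(Γ (1 - s) ω) ^ 2 / (2 * (1 - s)) -
        Γ (1 - s) ω * (t * s / (1 - s) - c))‖ ≤ 1 := by
      filter_upwards [hnonneg (1 - s) h1s.le] with ω hω
      rw [Real.norm_eq_abs, abs_of_pos (Real.exp_pos _)]
      apply Real.exp_le_one_iff.mpr
      have h1 : -(Γ (1 - s) ω) ^ 2 / (2 * (1 - s)) ≤ 0 := by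
        apply div_nonpos_of_nonpos_of_nonneg
        · simpa using sq_nonneg (Γ (1 - s) ω)
        · linarith
      nlinarith [mul_nonneg hω hA]
    have := norm_integral_le_of_norm_le_const (μ := μ) hbd
    simp only [measure_univ, probReal_univ, ENNReal.toReal_one, mul_one] at this
    exact (le_abs_self _).trans ((Real.norm_eq_abs _ ▸ this))
  refine ⟨key, ?_⟩
  have hub : ∀ᶠ s in L, q (1 - s) (s * t) / gaussDensity (1 - s) (s * t) ≤
      Real.exp (c * (s * t) - c ^ 2 * (1 - s) / 2) := by
    filter_upwards [key, hev] with s hk hs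
    obtain ⟨hA, hI⟩ := hk
    have h1s : 0 < 1 - s := by linarith [hs.2]
    rw [mul_comm s t, hq (1 - s) h1s (t * s)]
    have hI0 : 0 ≤ ∫ ω, Real.exp (-(Γ (1 - s) ω) ^ 2 / (2 * (1 - s)) -
        Γ (1 - s) ω * (t * s / (1 - s) - c)) ∂μ :=
      integral_nonneg fun ω => (Real.exp_pos _).le
    calc Real.exp (c * (t * s) - c ^ 2 * (1 - s) / 2) *
        ∫ ω, Real.exp (-(Γ (1 - s) ω) ^ 2 / (2 * (1 - s)) -
            Γ (1 - s) ω * (t * s / (1 - s) - c)) ∂μ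
        ≤ Real.exp (c * (t * s) - c ^ 2 * (1 - s) / 2) * 1 := by
          exact mul_le_mul_of_nonneg_left hI (Real.exp_pos _).le
      _ = Real.exp (c * (t * s) - c ^ 2 * (1 - s) / 2) := mul_one _
  have hlow : ∀ᶠ s in L, 0 ≤ q (1 - s) (s * t) / gaussDensity (1 - s) (s * t) := by
    filter_upwards [hev] with s hs
    have h1s : 0 < 1 - s := by linarith [hs.2]
    rw [mul_comm s t, hq (1 - s) h1s (t * s)]
    exact mul_nonneg (Real.exp_pos _).le (integral_nonneg fun ω => (Real.exp_pos _).le)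
  have hlim : Tendsto (fun s => Real.exp (c * (s * t) - c ^ 2 * (1 - s) / 2)) L
      (nhds (Real.exp (t * c))) := by
    have hcont : Continuous fun s : ℝ => Real.exp (c * (s * t) - c ^ 2 * (1 - s) / 2) := by
      continuity
    have := (hcont.tendsto 1).mono_left hL
    simpa [mul_comm] using this
  have hbddg : IsBoundedUnder (· ≤ ·) L
      (fun s => Real.exp (c * (s * t) - c ^ 2 * (1 - s) / 2)) :=
    hlim.isBoundedUnder_le
  have hcob : IsCoboundedUnder (· ≤ ·) L
      (fun s => q (1 - s) (s * t) / gaussDensity (1 - s) (s * t)) :=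
    isCoboundedUnder_le_of_eventually_le L hlow
  calc Filter.limsup (fun s => q (1 - s) (s * t) / gaussDensity (1 - s) (s * t)) L
      ≤ Filter.limsup (fun s => Real.exp (c * (s * t) - c ^ 2 * (1 - s) / 2)) L :=
        limsup_le_limsup hub hcob hbddg
    _ = Real.exp (t * c) := hlim.limsup_eq
end

section
/- Let f : [0,1] → (0,1] be C¹ with f(0)=1 and set C_f = sup |f'/f²|. For a decreasing sequence y = (y_i) in [0,1] with ∑ y_i ≤ 1, write F(y) = ∏_i f(y_i). Then for all r ∈ [0,1] and all such y, |F(ry)/f(r) - 1| ≤ 2 C_f e^{C_f} r (1 - y_1). -/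
open Filter

set_option maxHeartbeats 1000000 in
/-- Let `f : [0,1] → (0,1]` be `C¹` with `f 0 = 1` and
`C_f = sup_{[0,1]} |f'/f²|`. For a decreasing sequence `y = (y_i)` in `[0,1]` with
`∑ y_i ≤ 1` write `F(ry) = ∏_i f (r y_i)` (the limit of the partial products). Then for all
`r ∈ [0,1]`, `|F(ry)/f(r) - 1| ≤ 2 C_f e^{C_f} r (1 - y_1)`. -/
theorem product_ratio_bound
    (f f' : ℝ → ℝ)
    (hmap : ∀ x ∈ Set.Icc (0 : ℝ) 1, f x ∈ Set.Ioc (0 : ℝ) 1)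
    (hderiv : ∀ x ∈ Set.Icc (0 : ℝ) 1, HasDerivWithinAt f (f' x) (Set.Icc 0 1) x)
    (hf'cont : ContinuousOn f' (Set.Icc 0 1))
    (hf0 : f 0 = 1)
    (Cf : ℝ) (hCf : Cf = sSup ((fun x => |f' x / f x ^ 2|) '' Set.Icc (0 : ℝ) 1))
    (y : ℕ → ℝ) (hy : Antitone y) (hy01 : ∀ i, y i ∈ Set.Icc (0 : ℝ) 1)
    (hsum : Summable y) (htsum : ∑' i, y i ≤ 1) :
    ∀ r ∈ Set.Icc (0 : ℝ) 1, ∀ L : ℝ,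
      Tendsto (fun n => ∏ i ∈ Finset.range n, f (r * y i)) atTop (nhds L) →
      |L / f r - 1| ≤ 2 * Cf * Real.exp Cf * r * (1 - y 0) := by
  intro r hr L hL
  obtain ⟨hr0, hr1⟩ := hr
  have hfpos : ∀ x ∈ Set.Icc (0:ℝ) 1, 0 < f x := fun x hx => (hmap x hx).1
  have hfle : ∀ x ∈ Set.Icc (0:ℝ) 1, f x ≤ 1 := fun x hx => (hmap x hx).2
  have hfc : ContinuousOn f (Set.Icc 0 1) := fun x hx => (hderiv x hx).continuousWithinAt
  have hbdd : BddAbove ((fun x => |f' x / f x ^ 2|) '' Set.Icc (0:ℝ) 1) := by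
    apply IsCompact.bddAbove_image isCompact_Icc
    exact (hf'cont.div (hfc.pow 2) (fun x hx => ne_of_gt (pow_pos (hfpos x hx) 2))).abs
  have hCfge : ∀ x ∈ Set.Icc (0:ℝ) 1, |f' x / f x ^ 2| ≤ Cf := by
    intro x hx; rw [hCf]; exact le_csSup hbdd ⟨x, hx, rfl⟩
  have hCf0 : 0 ≤ Cf :=
    le_trans (abs_nonneg _) (hCfge 0 ⟨le_refl 0, zero_le_one⟩)
  -- |f'/f| ≤ Cf on [0,1]
  have hratio : ∀ x ∈ Set.Icc (0:ℝ) 1, |f' x / f x| ≤ Cf := by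
    intro x hx
    have h1 := hCfge x hx
    have hfx := hfpos x hx
    have heq : |f' x / f x| = |f' x / f x ^ 2| * f x := by
      rw [abs_div, abs_div, abs_of_pos hfx, abs_of_pos (pow_pos hfx 2)]
      field_simp
    rw [heq]
    calc |f' x / f x ^ 2| * f x ≤ Cf * 1 :=
          mul_le_mul h1 (hfle x hx) hfx.le hCf0
      _ = Cf := mul_one Cf
  -- log f is Cf-Lipschitz on [0,1]
  have hlogderiv : ∀ x ∈ Set.Icc (0:ℝ) 1,
      HasDerivWithinAt (fun t => Real.log (f t)) (f' x / f x) (Set.Icc 0 1) x :=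
    fun x hx => (hderiv x hx).log (ne_of_gt (hfpos x hx))
  have hlip : ∀ a ∈ Set.Icc (0:ℝ) 1, ∀ b ∈ Set.Icc (0:ℝ) 1,
      |Real.log (f b) - Real.log (f a)| ≤ Cf * |b - a| := by
    intro a ha b hb
    have := (convex_Icc (0:ℝ) 1).norm_image_sub_le_of_norm_hasDerivWithin_le
      hlogderiv (fun x hx => by simpa only [Real.norm_eq_abs] using hratio x hx) ha hb
    simpa only [Real.norm_eq_abs] using this
  have hlog0 : Real.log (f 0) = 0 := by rw [hf0, Real.log_one]
  have hlogbd : ∀ x ∈ Set.Icc (0:ℝ) 1, |Real.log (f x)| ≤ Cf * x := by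
    intro x hx
    have := hlip 0 ⟨le_refl 0, zero_le_one⟩ x hx
    rw [hlog0] at this
    simpa [abs_of_nonneg hx.1] using this
  -- membership of r * y i
  have hmem : ∀ i, r * y i ∈ Set.Icc (0:ℝ) 1 := by
    intro i
    obtain ⟨h1, h2⟩ := hy01 i
    exact ⟨mul_nonneg hr0 h1, by nlinarith⟩
  have hry : ∀ i, |Real.log (f (r * y i))| ≤ Cf * r * y i := by
    intro i
    have := hlogbd _ (hmem i)
    calc |Real.log (f (r * y i))| ≤ Cf * (r * y i) := this
      _ = Cf * r * y i := by ring
  -- summability of logs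
  have hsummable : Summable (fun i => Real.log (f (r * y i))) := by
    apply Summable.of_norm_bounded (hsum.mul_left (Cf * r))
    intro i; simpa [Real.norm_eq_abs] using hry i
  set T := ∑' i, Real.log (f (r * y i)) with hT
  -- identify L = exp T
  have hLT : L = Real.exp T := by
    have h1 : Tendsto (fun n => ∑ i ∈ Finset.range n, Real.log (f (r * y i)))
        atTop (nhds T) := hsummable.hasSum.tendsto_sum_nat
    have h2 : Tendsto (fun n => Real.exp (∑ i ∈ Finset.range n, Real.log (f (r * y i))))
        atTop (nhds (Real.exp T)) := (Real.continuous_exp.tendsto _).comp h1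
    have h3 : ∀ n, Real.exp (∑ i ∈ Finset.range n, Real.log (f (r * y i)))
        = ∏ i ∈ Finset.range n, f (r * y i) := by
      intro n
      rw [Real.exp_sum]
      exact Finset.prod_congr rfl fun i _ => Real.exp_log (hfpos _ (hmem i))
    rw [show (fun n => Real.exp (∑ i ∈ Finset.range n, Real.log (f (r * y i))))
        = fun n => ∏ i ∈ Finset.range n, f (r * y i) from funext h3] at h2
    exact tendsto_nhds_unique hL h2
  have hrmem : r ∈ Set.Icc (0:ℝ) 1 := ⟨hr0, hr1⟩
  have hfr : 0 < f r := hfpos r hrmem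
  -- L / f r = exp (T - log (f r))
  have hLf : L / f r = Real.exp (T - Real.log (f r)) := by
    rw [hLT, Real.exp_sub, Real.exp_log hfr]
  set a := Cf * r * (1 - y 0) with ha
  have hy00 : 0 ≤ y 0 := (hy01 0).1
  have hy01' : y 0 ≤ 1 := (hy01 0).2
  have ha0 : 0 ≤ a := by
    apply mul_nonneg (mul_nonneg hCf0 hr0); linarith
  have haCf : a ≤ Cf := by
    have h : r * (1 - y 0) ≤ 1 := by nlinarith
    calc a = Cf * (r * (1 - y 0)) := by rw [ha]; ring
      _ ≤ Cf * 1 := mul_le_mul_of_nonneg_left h hCf0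
      _ = Cf := mul_one Cf
  -- first term bound
  have hterm0 : |Real.log (f (r * y 0)) - Real.log (f r)| ≤ a := by
    have := hlip r hrmem (r * y 0) (hmem 0)
    have habs : |r * y 0 - r| = r * (1 - y 0) := by
      rw [abs_of_nonpos (by nlinarith)]; ring
    rw [habs] at this
    calc |Real.log (f (r * y 0)) - Real.log (f r)| ≤ Cf * (r * (1 - y 0)) := this
      _ = a := by rw [ha]; ring
  -- tail
  have hsummable' : Summable (fun i => Real.log (f (r * y (i + 1)))) :=
    (summable_nat_add_iff 1).2 hsummable
  set T₁ := ∑' i, Real.log (f (r * y (i + 1))) with hT₁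
  have hsplit : T = Real.log (f (r * y 0)) + T₁ := Summable.tsum_eq_zero_add hsummable
  have hT₁le : T₁ ≤ 0 := by
    apply tsum_nonpos
    intro i
    exact Real.log_nonpos (hfpos _ (hmem (i+1))).le (hfle _ (hmem (i+1)))
  have hysplit : ∑' i, y (i + 1) = (∑' i, y i) - y 0 := by
    have := Summable.tsum_eq_zero_add hsum; linarith
  have hT₁ge : -a ≤ T₁ := by
    have hsumtail : Summable (fun i => Cf * r * y (i + 1)) :=
      ((summable_nat_add_iff 1).2 hsum).mul_left (Cf * r)
    have hlow : ∀ i, -(Cf * r * y (i + 1)) ≤ Real.log (f (r * y (i + 1))) := by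
      intro i
      have h := (abs_le.1 (hry (i + 1))).1
      linarith
    have h1 : ∑' i, -(Cf * r * y (i + 1)) ≤ T₁ :=
      Summable.tsum_le_tsum hlow hsumtail.neg hsummable'
    have h2 : ∑' i, -(Cf * r * y (i + 1)) = -(Cf * r * ((∑' i, y i) - y 0)) := by
      rw [tsum_neg, tsum_mul_left, hysplit]
    have h3 : Cf * r * ((∑' i, y i) - y 0) ≤ a := by
      rw [ha]
      have hs1 : (∑' i, y i) - y 0 ≤ 1 - y 0 := by linarith
      exact mul_le_mul_of_nonneg_left hs1 (mul_nonneg hCf0 hr0)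
    rw [h2] at h1
    linarith
  -- bounds on S
  set S := T - Real.log (f r) with hS
  have hSub : S ≤ a := by
    have h0 := abs_le.1 hterm0
    rw [hS, hsplit]; linarith [h0.2]
  have hSlb : -(2 * a) ≤ S := by
    have h0 := abs_le.1 hterm0
    rw [hS, hsplit]; linarith [h0.1]
  -- final estimate
  rw [hLf]
  have hgoal : 2 * Cf * Real.exp Cf * r * (1 - y 0) = 2 * a * Real.exp Cf := by
    rw [ha]; ring
  rw [hgoal]
  have hexpCf1 : (1:ℝ) ≤ Real.exp Cf := Real.one_le_exp hCf0
  rw [abs_le]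
  constructor
  · -- lower bound
    have h1 : Real.exp (-(2 * a)) ≤ Real.exp S := Real.exp_le_exp.2 hSlb
    have h2 : 1 - 2 * a ≤ Real.exp (-(2 * a)) := by
      have := Real.add_one_le_exp (-(2 * a)); linarith
    nlinarith
  · -- upper bound
    have h1 : Real.exp S ≤ Real.exp a := Real.exp_le_exp.2 hSub
    have h2 : Real.exp a - 1 ≤ a * Real.exp a := by
      have hb := Real.add_one_le_exp (-a)
      have hc : Real.exp (-a) * Real.exp a = 1 := by
        rw [← Real.exp_add]; simp
      nlinarith [Real.exp_pos a]
    have h3 : Real.exp a ≤ Real.exp Cf := Real.exp_le_exp.2 haCf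
    nlinarith [Real.exp_pos a]
end

section
/- Let Γ be a subordinator with no drift, mean A = E[Γ_1] < ∞, and c ≥ A. Then for every y > 0 and K > 0: E[exp(-Γ_y²/(2y) + cΓ_y)] ≥ exp(-φ(K) y) - A/(2A + K), where φ is the Laplace exponent of Γ. -/
open MeasureTheory Real

/-- Let `Γ` be a driftless subordinator with mean `A = E[Γ₁] < ∞` (so that
`E[Γ_y] = A y`), Laplace exponent `φ` (so `E[exp (-q Γ_y)] = exp (-y φ q)`), and let `c ≥ A`.
Then for every `y > 0` and `K > 0`:
`E[exp (-Γ_y²/(2y) + c Γ_y)] ≥ exp (-φ(K) y) - A/(2A + K)`. -/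
theorem laplace_functional_ge
    {Ω : Type*} [MeasurableSpace Ω] (μ : Measure Ω) [IsProbabilityMeasure μ]
    (Γ : ℝ → Ω → ℝ) (φ : ℝ → ℝ) (A c : ℝ)
    (hmeas : ∀ u, Measurable (Γ u))
    (hnonneg : ∀ u ≥ (0 : ℝ), ∀ᵐ ω ∂μ, 0 ≤ Γ u ω)
    (hint : ∀ u ≥ (0 : ℝ), Integrable (Γ u) μ)
    (hA : A = ∫ ω, Γ 1 ω ∂μ)
    (hmean : ∀ u ≥ (0 : ℝ), ∫ ω, Γ u ω ∂μ = A * u)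
    (hφ : ∀ q ≥ (0 : ℝ), ∀ u ≥ (0 : ℝ),
      ∫ ω, Real.exp (-(q * Γ u ω)) ∂μ = Real.exp (-(u * φ q)))
    (hc : A ≤ c) :
    ∀ y > (0 : ℝ), ∀ K > (0 : ℝ),
      ∫ ω, Real.exp (-(Γ y ω) ^ 2 / (2 * y) + c * Γ y ω) ∂μ ≥
        Real.exp (-(φ K * y)) - A / (2 * A + K) := by
  intro y hy K hK
  set X := Γ y with hXdef
  have hXnn := hnonneg y hy.le
  have hAnn : 0 ≤ A := by
    rw [hA]; exact integral_nonneg_of_ae (hnonneg 1 zero_le_one)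
  have hden : (0:ℝ) < 2 * A + K := by linarith
  set b := (2 * A + K) * y with hb
  have hbpos : 0 < b := mul_pos hden hy
  set s : Set Ω := {ω | b ≤ X ω} with hs
  have hsm : MeasurableSet s := measurableSet_le measurable_const (hmeas y)
  -- g = exp(-K X) integrable
  have hgint : Integrable (fun ω => Real.exp (-(K * X ω))) μ := by
    by_contra h
    have h2 := hφ K hK.le y hy.le
    rw [integral_undef h] at h2
    exact absurd h2.symm (Real.exp_ne_zero _)
  -- f measurable and integrable
  have hfm : Measurable fun ω => Real.exp (-(X ω) ^ 2 / (2 * y) + c * X ω) := by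
    fun_prop
  have hfint : Integrable (fun ω => Real.exp (-(X ω) ^ 2 / (2 * y) + c * X ω)) μ := by
    refine (integrable_const (Real.exp (c ^ 2 * y / 2))).mono' hfm.aestronglyMeasurable ?_
    filter_upwards with ω
    rw [Real.norm_eq_abs, abs_of_pos (Real.exp_pos _)]
    apply Real.exp_le_exp.2
    have heq : -(X ω) ^ 2 / (2 * y) + c * X ω
        = c ^ 2 * y / 2 - (X ω - c * y) ^ 2 / (2 * y) := by
      field_simp; ring
    rw [heq]
    have h1 : 0 ≤ (X ω - c * y) ^ 2 / (2 * y) := by positivity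
    linarith
  -- indicator integrable
  have hiind : Integrable (s.indicator fun _ => (1:ℝ)) μ :=
    (integrable_const (1:ℝ)).indicator hsm
  -- pointwise inequality a.e.
  have hpt : ∀ᵐ ω ∂μ, Real.exp (-(K * X ω)) - s.indicator (fun _ => (1:ℝ)) ω
      ≤ Real.exp (-(X ω) ^ 2 / (2 * y) + c * X ω) := by
    filter_upwards [hXnn] with ω hω
    by_cases hmem : ω ∈ s
    · rw [Set.indicator_of_mem hmem]
      have h1 : Real.exp (-(K * X ω)) ≤ 1 := by
        apply Real.exp_le_one_iff.2; nlinarith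
      have h2 := Real.exp_pos (-(X ω) ^ 2 / (2 * y) + c * X ω)
      linarith
    · rw [Set.indicator_of_notMem hmem]
      have hlt : X ω < b := lt_of_not_ge hmem
      have harg : -(K * X ω) ≤ -(X ω) ^ 2 / (2 * y) + c * X ω := by
        have hq : X ω ^ 2 / (2 * y) ≤ (c + K) * X ω := by
          rw [div_le_iff₀ (by positivity : (0:ℝ) < 2 * y)]
          have hlt' : X ω < (2 * A + K) * y := hlt
          have hXω : (0:ℝ) ≤ X ω := hω
          nlinarith [mul_le_mul_of_nonneg_left hlt'.le hXω,
            mul_nonneg (mul_nonneg hy.le hXω) (sub_nonneg.2 hc)]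
        rw [neg_div]
        linarith
      have := Real.exp_le_exp.2 harg
      linarith
  -- integrate
  have hmono : ∫ ω, (Real.exp (-(K * X ω)) - s.indicator (fun _ => (1:ℝ)) ω) ∂μ
      ≤ ∫ ω, Real.exp (-(X ω) ^ 2 / (2 * y) + c * X ω) ∂μ :=
    integral_mono_ae (hgint.sub hiind) hfint hpt
  rw [integral_sub hgint hiind] at hmono
  have hg : ∫ ω, Real.exp (-(K * X ω)) ∂μ = Real.exp (-(φ K * y)) := by
    rw [hφ K hK.le y hy.le]; ring_nf
  have hindval : ∫ ω, s.indicator (fun _ => (1:ℝ)) ω ∂μ = (μ s).toReal := by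
    rw [integral_indicator hsm]; simp; rfl
  -- Markov
  have hmarkov : (μ s).toReal ≤ A / (2 * A + K) := by
    have h1 := mul_meas_ge_le_integral_of_nonneg hXnn (hint y hy.le) b
    rw [hmean y hy.le] at h1
    have h2 : (μ {x | b ≤ X x}).toReal ≤ A * y / b :=
      (le_div_iff₀' hbpos).2 h1
    have h3 : A * y / b = A / (2 * A + K) := by
      rw [hb]; field_simp
    rw [← hs] at h2
    linarith
  rw [hg, hindval] at hmono
  have : Real.exp (-(φ K * y)) - A / (2 * A + K)
      ≤ Real.exp (-(φ K * y)) - (μ s).toReal := by linarith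
  linarith
end
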